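/- arXiv:1103.4645 — 2 statements merged into one kernel-verified Lean document; each statement's English description precedes it below -/
import Mathlib

section
/- Let M, K₀, K₁, ε, h be positive real numbers and suppose β ≥ 1/4 + ε K₀/(4 K₁). Set α := (K₀ + ε⁻¹ K₁)/(M + ε⁻¹ K₁ β h²). Then α h² < 4, and consequently every pair of real sequences (x_k), (v_k) satisfying the simplified SyLiPN recursion x_{k+1} = x_k + h v_k + ½ h² a_k, v_{k+1} = v_k + ½ h (a_k + a_{k+1}), M a_k = −(K₀ + ε⁻¹ K₁) x_k − ε⁻¹ K₁ β h² a_k is bounded. -/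
/-!
With `K := K₀ + ε⁻¹ K₁` and `c := ε⁻¹ K₁ β h²`, the implicit relation solves to `a_k = -α x_k`
with `α = K / (M + c)`, so the scheme is velocity Verlet for the harmonic oscillator `ẍ = -α x`.
The condition on `β` says exactly `K h² ≤ 4 c`, whence `α h² < 4` because `M > 0`. Under that
step-size restriction Verlet conserves the modified energy `v² + α (1 - α h² / 4) x²`, which is
then positive definite and bounds every trajectory.
-/

noncomputable def verletEnergy (α h x v : ℝ) : ℝ :=
  v ^ 2 + α * (1 - α * h ^ 2 / 4) * x ^ 2

section Verlet

variable {α h : ℝ} {x v a : ℕ → ℝ}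

theorem verletEnergy_succ
    (hx : ∀ k, x (k + 1) = x k + h * v k + (1 / 2) * h ^ 2 * a k)
    (hv : ∀ k, v (k + 1) = v k + (1 / 2) * h * (a k + a (k + 1)))
    (ha : ∀ k, a k = -α * x k) (k : ℕ) :
    verletEnergy α h (x (k + 1)) (v (k + 1)) = verletEnergy α h (x k) (v k) := by
  rw [verletEnergy, verletEnergy, hv, ha (k + 1), hx, ha]
  ring

theorem verletEnergy_eq_initial
    (hx : ∀ k, x (k + 1) = x k + h * v k + (1 / 2) * h ^ 2 * a k)
    (hv : ∀ k, v (k + 1) = v k + (1 / 2) * h * (a k + a (k + 1)))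
    (ha : ∀ k, a k = -α * x k) (k : ℕ) :
    verletEnergy α h (x k) (v k) = verletEnergy α h (x 0) (v 0) := by
  induction k with
  | zero => rfl
  | succ k ih => rw [verletEnergy_succ hx hv ha, ih]

theorem abs_add_abs_le_of_verletEnergy (hα : 0 < α) (hαh : α * h ^ 2 < 4) (y w : ℝ) :
    |y| + |w| ≤
      √(verletEnergy α h y w / (α * (1 - α * h ^ 2 / 4))) + √(verletEnergy α h y w) := by
  have hq : 0 < α * (1 - α * h ^ 2 / 4) := mul_pos hα (by linarith)
  have hy : y ^ 2 ≤ verletEnergy α h y w / (α * (1 - α * h ^ 2 / 4)) := by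
    rw [le_div_iff₀ hq, verletEnergy]
    nlinarith [sq_nonneg w]
  have hw : w ^ 2 ≤ verletEnergy α h y w := by
    rw [verletEnergy]
    nlinarith [sq_nonneg y]
  exact add_le_add (Real.abs_le_sqrt hy) (Real.abs_le_sqrt hw)

theorem verlet_bounded (hα : 0 < α) (hαh : α * h ^ 2 < 4)
    (hx : ∀ k, x (k + 1) = x k + h * v k + (1 / 2) * h ^ 2 * a k)
    (hv : ∀ k, v (k + 1) = v k + (1 / 2) * h * (a k + a (k + 1)))
    (ha : ∀ k, a k = -α * x k) :
    ∃ C : ℝ, ∀ k, |x k| + |v k| ≤ C := by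
  refine ⟨√(verletEnergy α h (x 0) (v 0) / (α * (1 - α * h ^ 2 / 4))) +
    √(verletEnergy α h (x 0) (v 0)), fun k => ?_⟩
  have hbound := abs_add_abs_le_of_verletEnergy hα hαh (x k) (v k)
  rwa [verletEnergy_eq_initial hx hv ha] at hbound

end Verlet

section SyLiPN

variable {M K₀ K₁ ε h β : ℝ}

theorem stiff_mul_sq_le_four_mul (hK₁ : 0 < K₁) (hε : 0 < ε)
    (hβ : β ≥ 1 / 4 + ε * K₀ / (4 * K₁)) :
    (K₀ + ε⁻¹ * K₁) * h ^ 2 ≤ 4 * (ε⁻¹ * K₁ * β * h ^ 2) := by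
  have hβ' : ε⁻¹ * K₁ * h ^ 2 * (1 / 4 + ε * K₀ / (4 * K₁)) ≤ ε⁻¹ * K₁ * h ^ 2 * β :=
    mul_le_mul_of_nonneg_left hβ (by positivity)
  have hexpand :
      ε⁻¹ * K₁ * h ^ 2 * (1 / 4 + ε * K₀ / (4 * K₁)) = (K₀ + ε⁻¹ * K₁) * h ^ 2 / 4 := by
    field_simp
    ring
  linarith

theorem sylipn_denom_pos (hM : 0 < M) (hK₀ : 0 < K₀) (hK₁ : 0 < K₁) (hε : 0 < ε)
    (hβ : β ≥ 1 / 4 + ε * K₀ / (4 * K₁)) :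
    0 < M + ε⁻¹ * K₁ * β * h ^ 2 := by
  have hle := stiff_mul_sq_le_four_mul (h := h) hK₁ hε hβ
  have hK : 0 ≤ (K₀ + ε⁻¹ * K₁) * h ^ 2 := by positivity
  linarith

theorem sylipn_alpha_mul_sq_lt_four (hM : 0 < M) (hK₀ : 0 < K₀) (hK₁ : 0 < K₁) (hε : 0 < ε)
    (hβ : β ≥ 1 / 4 + ε * K₀ / (4 * K₁)) :
    (K₀ + ε⁻¹ * K₁) / (M + ε⁻¹ * K₁ * β * h ^ 2) * h ^ 2 < 4 := by
  have hle := stiff_mul_sq_le_four_mul (h := h) hK₁ hε hβ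
  rw [div_mul_eq_mul_div, div_lt_iff₀ (sylipn_denom_pos hM hK₀ hK₁ hε hβ)]
  linarith

theorem sylipn_accel_eq {K c a x : ℝ} (hD : M + c ≠ 0) (hA : M * a = -K * x - c * a) :
    a = -(K / (M + c)) * x := by
  field_simp
  linear_combination hA

end SyLiPN

theorem stmt_5_general (M K₀ K₁ ε h : ℝ) (hM : 0 < M) (hK₀ : 0 < K₀) (hK₁ : 0 < K₁)
    (hε : 0 < ε) (β : ℝ) (hβ : β ≥ 1 / 4 + ε * K₀ / (4 * K₁)) :
    (let α : ℝ := (K₀ + ε⁻¹ * K₁) / (M + ε⁻¹ * K₁ * β * h ^ 2)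
    α * h ^ 2 < 4) ∧
    ∀ (x v a : ℕ → ℝ),
      (∀ k, x (k + 1) = x k + h * v k + (1 / 2) * h ^ 2 * a k) →
      (∀ k, v (k + 1) = v k + (1 / 2) * h * (a k + a (k + 1))) →
      (∀ k, M * a k = -(K₀ + ε⁻¹ * K₁) * x k - ε⁻¹ * K₁ * β * h ^ 2 * a k) →
      ∃ C : ℝ, ∀ k, |x k| + |v k| ≤ C := by
  have hden := sylipn_denom_pos (h := h) hM hK₀ hK₁ hε hβ
  have hα : 0 < (K₀ + ε⁻¹ * K₁) / (M + ε⁻¹ * K₁ * β * h ^ 2) := by positivity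
  have hαh := sylipn_alpha_mul_sq_lt_four (h := h) hM hK₀ hK₁ hε hβ
  exact ⟨hαh, fun x v a hx hv hA =>
    verlet_bounded hα hαh hx hv fun k => sylipn_accel_eq hden.ne' (hA k)⟩

/-- Stability of the simplified SyLiPN integrator for stiff systems.
For positive `M`, `K₀`, `K₁`, `ε`, `h` and `β ≥ 1/4 + ε K₀/(4 K₁)`, the parameter
`α = (K₀ + ε⁻¹ K₁)/(M + ε⁻¹ K₁ β h²)` satisfies `α h² < 4`, and every trajectory
of the simplified SyLiPN recursion is bounded. -/
theorem stmt_5 (M K₀ K₁ ε h : ℝ) (hM : 0 < M) (hK₀ : 0 < K₀) (hK₁ : 0 < K₁)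
    (hε : 0 < ε) (hh : 0 < h) (β : ℝ) (hβ : β ≥ 1 / 4 + ε * K₀ / (4 * K₁)) :
    (let α : ℝ := (K₀ + ε⁻¹ * K₁) / (M + ε⁻¹ * K₁ * β * h ^ 2)
    α * h ^ 2 < 4) ∧
    ∀ (x v a : ℕ → ℝ),
      (∀ k, x (k + 1) = x k + h * v k + (1 / 2) * h ^ 2 * a k) →
      (∀ k, v (k + 1) = v k + (1 / 2) * h * (a k + a (k + 1))) →
      (∀ k, M * a k = -(K₀ + ε⁻¹ * K₁) * x k - ε⁻¹ * K₁ * β * h ^ 2 * a k) →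
      ∃ C : ℝ, ∀ k, |x k| + |v k| ≤ C :=
  stmt_5_general M K₀ K₁ ε h hM hK₀ hK₁ hε β hβ
end

section
/- Let V : ℝⁿ → ℝ be three times continuously differentiable, let β ∈ ℝ, let x₀, v₀ ∈ ℝⁿ, and let q be a solution of q''(t) = −∇V(q(t)) on a neighborhood of 0 with q(0) = x₀, q'(0) = v₀. For h > 0 small enough that the matrices below are invertible, define a₀(h) = −(I + β h² Hess V(x₀))⁻¹ ∇V(x₀), x₁(h) = x₀ + h v₀ + ½ h² a₀(h), a₁(h) = −(I + β h² Hess V(x₁(h)))⁻¹ ∇V(x₁(h)), and v₁(h) = v₀ + ½ h (a₀(h) + a₁(h)). Then there exist C > 0 and h₀ > 0 such that for all h ∈ (0, h₀], ‖q(h) − x₁(h)‖ ≤ C h³ and ‖q'(h) − v₁(h)‖ ≤ C h³; i.e., the SyLiPN integrator has a third-order local error. -/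
/-!
Expand the exact flow and the scheme to second order in `h`. Along the solution,
`q h = x₀ + h v₀ - h²/2 ∇V(x₀) + O(h³)` and `q' h = v₀ - h ∇V(x₀) - h²/2 D∇V(x₀) v₀ + O(h³)`:
each remainder has a derivative one order smaller and vanishes at `0`, so the mean value
inequality integrates the bounds. On the scheme side, the identity
`-(I + cH)⁻¹ g + g = c (I + cH)⁻¹ H g` with `c = β h²`, together with the continuity of the
matrix inverse at `I`, gives `a_k = -∇V(x_k) + O(h²)`. Hence `x₁` is the Taylor polynomial of
`q` up to `O(h⁴)`, and since `∇V(x₁) = ∇V(x₀) + h D∇V(x₀) v₀ + O(h²)` the trapezoidal velocity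
update reproduces the Taylor polynomial of `q'` up to `O(h³)`.
-/

open Matrix
open Asymptotics Filter Topology Set

section MeanValue

variable {E F : Type*} [NormedAddCommGroup E] [NormedSpace ℝ E]
  [NormedAddCommGroup F] [NormedSpace ℝ F]

theorem isBigO_sub_norm_pow_succ {f : E → F} {f' : E → E →L[ℝ] F} {x₀ : E} {k : ℕ}
    (hf : ∀ᶠ y in 𝓝 x₀, HasFDerivAt f (f' y) y)
    (hf' : f' =O[𝓝 x₀] fun y => ‖y - x₀‖ ^ k) :
    (fun y => f y - f x₀) =O[𝓝 x₀] fun y => ‖y - x₀‖ ^ (k + 1) := by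
  obtain ⟨C, hC, hCf'⟩ := hf'.exists_pos
  obtain ⟨ε, hε, hball⟩ := Metric.eventually_nhds_iff_ball.1 (hf.and hCf'.bound)
  refine IsBigO.of_bound C ?_
  filter_upwards [Metric.ball_mem_nhds x₀ hε] with y hy
  set ρ := ‖y - x₀‖
  have hsub : Metric.closedBall x₀ ρ ⊆ Metric.ball x₀ ε :=
    Metric.closedBall_subset_ball (by simpa [ρ, dist_eq_norm] using hy)
  have hderiv_le : ∀ z ∈ Metric.closedBall x₀ ρ, ‖f' z‖ ≤ C * ρ ^ k := by
    intro z hz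
    refine (hball z (hsub hz)).2.trans ?_
    rw [norm_pow, norm_norm]
    gcongr
    rwa [← dist_eq_norm]
  have := (convex_closedBall x₀ ρ).norm_image_sub_le_of_norm_hasFDerivWithin_le (y := y)
    (fun z hz => (hball z (hsub hz)).1.hasFDerivWithinAt) hderiv_le
    (Metric.mem_closedBall_self (norm_nonneg (y - x₀))) (by simp [dist_eq_norm, ρ])
  rw [norm_pow, norm_norm, pow_succ, ← mul_assoc]
  exact this

theorem isBigO_pow_succ_of_hasDerivAt {f f' : ℝ → F} {k : ℕ}
    (hf : ∀ᶠ t in 𝓝 0, HasDerivAt f (f' t) t) (hf' : f' =O[𝓝 0] (· ^ k)) (h0 : f 0 = 0) :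
    f =O[𝓝 0] (· ^ (k + 1)) := by
  have hspan : (fun t => ContinuousLinearMap.toSpanSingleton ℝ (f' t))
      =O[𝓝 0] fun t : ℝ => ‖t - 0‖ ^ k := by
    rw [← isBigO_norm_left]
    simpa [ContinuousLinearMap.norm_toSpanSingleton] using hf'.norm_norm
  have := isBigO_sub_norm_pow_succ (hf.mono fun t ht => ht.hasFDerivAt) hspan
  simp only [h0, sub_zero, ← norm_pow] at this
  exact isBigO_norm_right.1 this

theorem isBigO_sub_sub_fderiv_sq {g : E → F} {x₀ : E} (hg : ContDiffAt ℝ 2 g x₀) :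
    (fun y => g y - g x₀ - fderiv ℝ g x₀ (y - x₀)) =O[𝓝 x₀] fun y => ‖y - x₀‖ ^ 2 := by
  have hdiff : ∀ᶠ y in 𝓝 x₀, HasFDerivAt (fun y => g y - fderiv ℝ g x₀ y)
      (fderiv ℝ g y - fderiv ℝ g x₀) y := by
    filter_upwards [hg.eventually (by simp)] with y hy
    exact (hy.differentiableAt (by simp)).hasFDerivAt.sub (fderiv ℝ g x₀).hasFDerivAt
  have hfderiv : (fun y => fderiv ℝ g y - fderiv ℝ g x₀) =O[𝓝 x₀] fun y => ‖y - x₀‖ ^ 1 := by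
    simpa using ((hg.fderiv_right (m := 1) le_rfl).differentiableAt one_ne_zero).isBigO_sub
  simpa [map_sub, sub_sub_sub_comm] using isBigO_sub_norm_pow_succ hdiff hfderiv

end MeanValue

theorem Matrix.neg_inv_one_add_smul_mulVec_add_self {ι R : Type*} [Fintype ι] [DecidableEq ι]
    [CommRing R] {c : R} {H : Matrix ι ι R} (hu : IsUnit (1 + c • H)) (g : ι → R) :
    -((1 + c • H)⁻¹ *ᵥ g) + g = c • ((1 + c • H)⁻¹ *ᵥ (H *ᵥ g)) := by
  have hinv : (1 + c • H)⁻¹ *ᵥ ((1 + c • H) *ᵥ g) = g := by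
    rw [mulVec_mulVec, nonsing_inv_mul _ ((isUnit_iff_isUnit_det _).1 hu), one_mulVec]
  calc -((1 + c • H)⁻¹ *ᵥ g) + g
        = -((1 + c • H)⁻¹ *ᵥ g) + (1 + c • H)⁻¹ *ᵥ ((1 + c • H) *ᵥ g) := by rw [hinv]
    _ = c • ((1 + c • H)⁻¹ *ᵥ (H *ᵥ g)) := by
        rw [add_mulVec, one_mulVec, smul_mulVec, mulVec_add, mulVec_smul]
        abel

theorem Filter.Tendsto.matrix_mulVec {α m n R : Type*} [Fintype n] [TopologicalSpace R]
    [NonUnitalNonAssocSemiring R] [ContinuousAdd R] [ContinuousMul R] {l : Filter α}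
    {A : α → Matrix m n R} {v : α → n → R} {A₀ : Matrix m n R} {v₀ : n → R}
    (hA : Tendsto A l (𝓝 A₀)) (hv : Tendsto v l (𝓝 v₀)) :
    Tendsto (fun x => A x *ᵥ v x) l (𝓝 (A₀ *ᵥ v₀)) :=
  ((continuous_fst.matrix_mulVec continuous_snd).tendsto (A₀, v₀)).comp (hA.prodMk_nhds hv)

theorem tendsto_one_add_sq_smul {ι : Type*} [DecidableEq ι] {H : ℝ → Matrix ι ι ℝ}
    {H₀ : Matrix ι ι ℝ} (β : ℝ) (hH : Tendsto H (𝓝 0) (𝓝 H₀)) :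
    Tendsto (fun h => 1 + (β * h ^ 2) • H h) (𝓝 0) (𝓝 1) := by
  have hc : Tendsto (fun h : ℝ => β * h ^ 2) (𝓝 0) (𝓝 0) := by
    simpa using ((tendsto_id (x := 𝓝 (0 : ℝ))).pow 2).const_mul β
  simpa using tendsto_const_nhds.add (hc.smul hH)

theorem isBigO_div_const_self {α : Type*} (f : α → ℝ) (c : ℝ) (l : Filter α) :
    (fun a => f a / c) =O[l] f :=
  (isBigO_const_mul_self c⁻¹ f l).congr (fun _ => inv_mul_eq_div _ _) fun _ => rfl

theorem exists_pos_forall_of_eventually_nhds_zero {p : ℝ → Prop} (hp : ∀ᶠ h in 𝓝 0, p h) :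
    ∃ h₀ > 0, ∀ h, 0 < h → h ≤ h₀ → p h := by
  obtain ⟨ε, hε, hball⟩ := Metric.eventually_nhds_iff_ball.1 hp
  refine ⟨ε / 2, by positivity, fun h h0 hh => hball h ?_⟩
  rw [Metric.mem_ball, dist_zero_right, Real.norm_of_nonneg h0.le]
  linarith

section Accel

variable {ι : Type*} [Fintype ι] [DecidableEq ι]

noncomputable def sylipnAccel (β h : ℝ) (H : Matrix ι ι ℝ) (g : ι → ℝ) : ι → ℝ :=
  -((1 + (β * h ^ 2) • H)⁻¹ *ᵥ g)

variable {H : ℝ → Matrix ι ι ℝ} {H₀ : Matrix ι ι ℝ}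

theorem eventually_isUnit_one_add_sq_smul (β : ℝ) (hH : Tendsto H (𝓝 0) (𝓝 H₀)) :
    ∀ᶠ h in 𝓝 0, IsUnit (1 + (β * h ^ 2) • H h) := by
  have hdet := (continuous_id.matrix_det.tendsto 1).comp (tendsto_one_add_sq_smul β hH)
  rw [Function.comp_def, id, det_one] at hdet
  filter_upwards [hdet.eventually_ne one_ne_zero] with h hh
  exact (isUnit_iff_isUnit_det _).2 hh.isUnit

theorem tendsto_inv_one_add_sq_smul (β : ℝ) (hH : Tendsto H (𝓝 0) (𝓝 H₀)) :
    Tendsto (fun h => (1 + (β * h ^ 2) • H h)⁻¹) (𝓝 0) (𝓝 1) := by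
  have hinv : ContinuousAt Inv.inv (1 : Matrix ι ι ℝ) :=
    continuousAt_matrix_inv 1 (by rw [det_one]; exact NormedRing.inverse_continuousAt 1)
  simpa [Function.comp_def] using hinv.tendsto.comp (tendsto_one_add_sq_smul β hH)

theorem sylipnAccel_add_isBigO (β : ℝ) {g : ℝ → ι → ℝ} {g₀ : ι → ℝ}
    (hH : Tendsto H (𝓝 0) (𝓝 H₀)) (hg : Tendsto g (𝓝 0) (𝓝 g₀)) :
    (fun h => sylipnAccel β h (H h) (g h) + g h) =O[𝓝 0] (· ^ 2) := by
  have hbounded : (fun h => (1 + (β * h ^ 2) • H h)⁻¹ *ᵥ (H h *ᵥ g h)) =O[𝓝 0]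
      fun _ => (1 : ℝ) :=
    ((tendsto_inv_one_add_sq_smul β hH).matrix_mulVec (hH.matrix_mulVec hg)).isBigO_one ℝ
  have hsmul := (isBigO_const_mul_self β (· ^ 2) (𝓝 0)).smul hbounded
  simp only [smul_eq_mul, mul_one] at hsmul
  refine hsmul.congr' ?_ EventuallyEq.rfl
  filter_upwards [eventually_isUnit_one_add_sq_smul β hH] with h hu
  exact (neg_inv_one_add_smul_mulVec_add_self hu (g h)).symm

section Scheme

variable (β : ℝ) (g : (ι → ℝ) → ι → ℝ) (H : (ι → ℝ) → Matrix ι ι ℝ) (x v : ι → ℝ)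

noncomputable def sylipnPos (h : ℝ) : ι → ℝ :=
  x + h • v + (h ^ 2 / 2) • sylipnAccel β h (H x) (g x)

noncomputable def sylipnVel (h : ℝ) : ι → ℝ :=
  v + (h / 2) • (sylipnAccel β h (H x) (g x) +
    sylipnAccel β h (H (sylipnPos β g H x v h)) (g (sylipnPos β g H x v h)))

theorem sylipnPos_sub_taylor_isBigO :
    (fun h => sylipnPos β g H x v h - (x + h • v + (h ^ 2 / 2) • -g x)) =O[𝓝 0] (· ^ 4) := by
  have ha := sylipnAccel_add_isBigO β (tendsto_const_nhds (x := H x))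
    (tendsto_const_nhds (x := g x))
  refine ((isBigO_div_const_self (· ^ 2) 2 _).smul ha).congr (fun h => ?_) fun h => ?_
  · simp only [sylipnPos]; module
  · simp only [smul_eq_mul]; ring

theorem sylipnPos_sub_sub_isBigO :
    (fun h => sylipnPos β g H x v h - x - h • v) =O[𝓝 0] (· ^ 2) := by
  have ha : (fun h => sylipnAccel β h (H x) (g x)) =O[𝓝 0] fun _ => (1 : ℝ) :=
    ((tendsto_inv_one_add_sq_smul β (tendsto_const_nhds (x := H x))).matrix_mulVec
      (tendsto_const_nhds (x := g x))).neg.isBigO_one ℝ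
  refine ((isBigO_div_const_self (· ^ 2) 2 _).smul ha).congr (fun h => ?_) fun h => ?_
  · simp only [sylipnPos]; abel
  · simp

theorem sylipnPos_sub_isBigO :
    (fun h => sylipnPos β g H x v h - x) =O[𝓝 0] fun h => h := by
  have hsq : (fun h : ℝ => h ^ 2) =O[𝓝 0] fun h => h := by
    simpa using (isLittleO_pow_pow (𝕜 := ℝ) (m := 1) (n := 2) one_lt_two).isBigO
  have hlin : (fun h : ℝ => h • v) =O[𝓝 0] fun h => h :=
    isBigO_of_le' (c := ‖v‖) _ fun h => by rw [norm_smul, mul_comm]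
  refine (((sylipnPos_sub_sub_isBigO β g H x v).trans hsq).add hlin).congr (fun h => ?_)
    fun _ => rfl
  abel

theorem tendsto_sylipnPos : Tendsto (sylipnPos β g H x v) (𝓝 0) (𝓝 x) := by
  have := (sylipnPos_sub_isBigO β g H x v).trans_tendsto tendsto_id
  simpa using this.add_const x

theorem sylipnAccel_sylipnPos_add_isBigO (hH : ContinuousAt H x) (hg : ContDiffAt ℝ 2 g x) :
    (fun h => sylipnAccel β h (H (sylipnPos β g H x v h)) (g (sylipnPos β g H x v h)) +
      g x + h • fderiv ℝ g x v) =O[𝓝 0] (· ^ 2) := by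
  have hx₁ := tendsto_sylipnPos β g H x v
  have haccel := sylipnAccel_add_isBigO β (hH.tendsto.comp hx₁)
    ((hg.continuousAt.tendsto).comp hx₁)
  have hquad : (fun h => g (sylipnPos β g H x v h) - g x -
      fderiv ℝ g x (sylipnPos β g H x v h - x)) =O[𝓝 0] (· ^ 2) := by
    refine ((isBigO_sub_sub_fderiv_sq hg).comp_tendsto hx₁).trans ?_
    simpa [Function.comp_def] using (sylipnPos_sub_isBigO β g H x v).norm_left.pow 2
  have hlin : (fun h => fderiv ℝ g x (sylipnPos β g H x v h - x - h • v)) =O[𝓝 0] (· ^ 2) :=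
    ((fderiv ℝ g x).isBigO_comp _ _).trans (sylipnPos_sub_sub_isBigO β g H x v)
  refine ((haccel.sub hquad).sub hlin).congr (fun h => ?_) fun _ => rfl
  simp only [Function.comp_apply, map_sub, map_smul]
  abel

theorem sylipnVel_sub_taylor_isBigO (hH : ContinuousAt H x) (hg : ContDiffAt ℝ 2 g x) :
    (fun h => sylipnVel β g H x v h - (v + h • -g x + (h ^ 2 / 2) • -fderiv ℝ g x v))
      =O[𝓝 0] (· ^ 3) := by
  have ha₀ := sylipnAccel_add_isBigO β (tendsto_const_nhds (x := H x))
    (tendsto_const_nhds (x := g x))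
  have ha₁ := sylipnAccel_sylipnPos_add_isBigO β g H x v hH hg
  refine ((isBigO_div_const_self (fun h => h) 2 _).smul (ha₀.add ha₁)).congr (fun h => ?_) fun h => ?_
  · simp only [sylipnVel]; module
  · simp only [smul_eq_mul]; ring

end Scheme

end Accel

section Trajectory

variable {E : Type*} [NormedAddCommGroup E] [NormedSpace ℝ E]

theorem hasDerivAt_const_add_smul (a b : E) (t : ℝ) :
    HasDerivAt (fun t : ℝ => a + t • b) b t := by
  simpa using ((hasDerivAt_id t).smul_const b).const_add a

theorem hasDerivAt_add_smul_add_sq_div_two_smul (a b c : E) (t : ℝ) :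
    HasDerivAt (fun t : ℝ => a + t • b + (t ^ 2 / 2) • c) (b + t • c) t := by
  have hsq := ((hasDerivAt_pow 2 t).div_const 2).smul_const c
  exact ((hasDerivAt_const_add_smul a b t).add hsq).congr_deriv (by simp)

variable {g : E → E} {q q' : ℝ → E}

theorem newtonFlow_pos_sub_taylor_isBigO (hq : ∀ᶠ t in 𝓝 0, HasDerivAt q (q' t) t)
    (hq' : ∀ᶠ t in 𝓝 0, HasDerivAt q' (-g (q t)) t) (hg : DifferentiableAt ℝ g (q 0)) :
    (fun t => q t - (q 0 + t • q' 0 + (t ^ 2 / 2) • -g (q 0))) =O[𝓝 0] (· ^ 3) := by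
  have hacc : (fun t => -g (q t) - -g (q 0)) =O[𝓝 0] (· ^ 1) := by
    simpa using (hg.hasFDerivAt.comp_hasDerivAt 0 hq.self_of_nhds).neg.isBigO_sub
  have hvel : (fun t => q' t - (q' 0 + t • -g (q 0))) =O[𝓝 0] (· ^ 2) := by
    refine isBigO_pow_succ_of_hasDerivAt ?_ hacc (by simp)
    filter_upwards [hq'] with t ht
    exact ht.sub (hasDerivAt_const_add_smul _ _ t)
  refine isBigO_pow_succ_of_hasDerivAt ?_ hvel (by simp)
  filter_upwards [hq] with t ht
  exact ht.sub (hasDerivAt_add_smul_add_sq_div_two_smul _ _ _ t)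

theorem newtonFlow_vel_sub_taylor_isBigO (hq : ∀ᶠ t in 𝓝 0, HasDerivAt q (q' t) t)
    (hq' : ∀ᶠ t in 𝓝 0, HasDerivAt q' (-g (q t)) t) (hg : ContDiffAt ℝ 2 g (q 0)) :
    (fun t => q' t - (q' 0 + t • -g (q 0) + (t ^ 2 / 2) • -fderiv ℝ g (q 0) (q' 0)))
      =O[𝓝 0] (· ^ 3) := by
  have hq0 := hq.self_of_nhds
  have hdisp : (fun t => q t - q 0) =O[𝓝 0] (· ^ 1) := by simpa using hq0.isBigO_sub
  have hdisp₂ : (fun t => q t - (q 0 + t • q' 0)) =O[𝓝 0] (· ^ 2) := by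
    refine isBigO_pow_succ_of_hasDerivAt ?_ (by simpa using hq'.self_of_nhds.isBigO_sub)
      (by simp)
    filter_upwards [hq] with t ht
    exact ht.sub (hasDerivAt_const_add_smul _ _ t)
  have hquad : (fun t => g (q t) - g (q 0) - fderiv ℝ g (q 0) (q t - q 0)) =O[𝓝 0] (· ^ 2) :=
    ((isBigO_sub_sub_fderiv_sq hg).comp_tendsto hq0.continuousAt.tendsto).trans
      (by simpa [Function.comp_def] using hdisp.norm_left.pow 2)
  have hlin : (fun t => fderiv ℝ g (q 0) (q t - (q 0 + t • q' 0))) =O[𝓝 0] (· ^ 2) :=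
    ((fderiv ℝ g (q 0)).isBigO_comp _ _).trans hdisp₂
  have hacc : (fun t => -g (q t) - (-g (q 0) + t • -fderiv ℝ g (q 0) (q' 0)))
      =O[𝓝 0] (· ^ 2) := by
    refine (hquad.add hlin).neg_left.congr (fun t => ?_) fun _ => rfl
    simp only [map_sub, map_add, map_smul, smul_neg]
    abel
  refine isBigO_pow_succ_of_hasDerivAt ?_ hacc (by simp)
  filter_upwards [hq'] with t ht
  exact ht.sub (hasDerivAt_add_smul_add_sq_div_two_smul _ _ _ t)

end Trajectory

section Potential

variable {ι : Type*} [Fintype ι] [DecidableEq ι] {V : (ι → ℝ) → ℝ}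

theorem ContDiff.contDiff_of_apply_eq_fderiv_single {n : WithTop ℕ∞}
    (hV : ContDiff ℝ (n + 1) V) {gradV : (ι → ℝ) → ι → ℝ}
    (hgrad : ∀ y i, gradV y i = fderiv ℝ V y (Pi.single i 1)) : ContDiff ℝ n gradV := by
  rw [funext₂ hgrad]
  exact contDiff_pi.2 fun _ => (hV.fderiv_right le_rfl).clm_apply contDiff_const

theorem ContDiff.continuous_of_apply_eq_fderiv_fderiv_single (hV : ContDiff ℝ 2 V)
    {hessV : (ι → ℝ) → Matrix ι ι ℝ}
    (hhess : ∀ y i j, hessV y i j =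
      fderiv ℝ (fun z => fderiv ℝ V z (Pi.single j 1)) y (Pi.single i 1)) :
    Continuous hessV := by
  refine continuous_matrix fun i j => ?_
  simp only [hhess]
  have hpartial : ContDiff ℝ 1 fun z => fderiv ℝ V z (Pi.single j 1) :=
    (hV.fderiv_right (m := 1) le_rfl).clm_apply contDiff_const
  exact (hpartial.continuous_fderiv one_ne_zero).clm_apply continuous_const

end Potential

/-- Third-order local error of the SyLiPN integrator (unit mass)
`a_k = −(I + β h² Hess V(x_k))⁻¹ ∇V(x_k)`, `x_{k+1} = x_k + h v_k + ½ h² a_k`,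
`v_{k+1} = v_k + ½ h (a_k + a_{k+1})` for the Newtonian dynamics `q'' = −∇V(q)`,
where `V` is `C³` and `Hess V` is the Hessian matrix of `V`. -/
theorem stmt_7 (n : ℕ) (V : (Fin n → ℝ) → ℝ) (hV : ContDiff ℝ 3 V) (β : ℝ)
    (x₀ v₀ : Fin n → ℝ)
    -- the gradient of V: the vector of partial derivatives
    (gradV : (Fin n → ℝ) → (Fin n → ℝ))
    (hgrad : ∀ y i, gradV y i = fderiv ℝ V y (Pi.single i 1))
    -- the Hessian matrix of V
    (hessV : (Fin n → ℝ) → Matrix (Fin n) (Fin n) ℝ)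
    (hhess : ∀ y i j, hessV y i j =
      fderiv ℝ (fun z => fderiv ℝ V z (Pi.single j 1)) y (Pi.single i 1))
    -- q is a solution of q'' = −∇V(q) on a neighborhood (−T, T) of 0,
    -- with derivative q' and initial data (x₀, v₀)
    (T : ℝ) (hT : 0 < T) (q q' : ℝ → (Fin n → ℝ))
    (hq : ∀ t ∈ Set.Ioo (-T) T, HasDerivAt q (q' t) t)
    (hq' : ∀ t ∈ Set.Ioo (-T) T, HasDerivAt q' (-(gradV (q t))) t)
    (hq0 : q 0 = x₀) (hq'0 : q' 0 = v₀) :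
    -- the one-step update of the SyLiPN integrator, as a function of the timestep h
    let a₀ : ℝ → (Fin n → ℝ) := fun h =>
      -(((1 : Matrix (Fin n) (Fin n) ℝ) + (β * h ^ 2) • hessV x₀)⁻¹.mulVec
        (gradV x₀))
    let x₁ : ℝ → (Fin n → ℝ) := fun h => x₀ + h • v₀ + (h ^ 2 / 2) • a₀ h
    let a₁ : ℝ → (Fin n → ℝ) := fun h =>
      -(((1 : Matrix (Fin n) (Fin n) ℝ) + (β * h ^ 2) • hessV (x₁ h))⁻¹.mulVec
        (gradV (x₁ h)))
    let v₁ : ℝ → (Fin n → ℝ) := fun h => v₀ + (h / 2) • (a₀ h + a₁ h)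
    ∃ C > (0 : ℝ), ∃ h₀ > (0 : ℝ), ∀ h : ℝ, 0 < h → h ≤ h₀ →
      IsUnit ((1 : Matrix (Fin n) (Fin n) ℝ) + (β * h ^ 2) • hessV x₀) ∧
      IsUnit ((1 : Matrix (Fin n) (Fin n) ℝ) + (β * h ^ 2) • hessV (x₁ h)) ∧
      ‖q h - x₁ h‖ ≤ C * h ^ 3 ∧ ‖q' h - v₁ h‖ ≤ C * h ^ 3 := by
  intro a₀ x₁ a₁ v₁
  have hg : ContDiff ℝ 2 gradV := hV.contDiff_of_apply_eq_fderiv_single hgrad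
  have hH : Continuous hessV :=
    (hV.of_le (by norm_num)).continuous_of_apply_eq_fderiv_fderiv_single hhess
  have hIoo : Ioo (-T) T ∈ 𝓝 (0 : ℝ) := Ioo_mem_nhds (by linarith) hT
  have hqd := eventually_of_mem hIoo hq
  have hqd' := eventually_of_mem hIoo hq'
  have hpos := newtonFlow_pos_sub_taylor_isBigO hqd hqd' (hg.differentiable (by norm_num) _)
  have hvel := newtonFlow_vel_sub_taylor_isBigO hqd hqd' hg.contDiffAt
  rw [hq0, hq'0] at hpos hvel
  -- `x₁` and `v₁` are `sylipnPos` and `sylipnVel` up to unfolding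
  have hposErr : (fun h => q h - x₁ h) =O[𝓝 0] (· ^ 3) :=
    (hpos.sub ((sylipnPos_sub_taylor_isBigO β gradV hessV x₀ v₀).trans
      (isLittleO_pow_pow (by norm_num)).isBigO)).congr
      (fun _ => sub_sub_sub_cancel_right _ _ _) fun _ => rfl
  have hvelErr : (fun h => q' h - v₁ h) =O[𝓝 0] (· ^ 3) :=
    (hvel.sub (sylipnVel_sub_taylor_isBigO β gradV hessV x₀ v₀ hH.continuousAt
      hg.contDiffAt)).congr (fun _ => sub_sub_sub_cancel_right _ _ _) fun _ => rfl
  obtain ⟨C, hC, hCerr⟩ := (hposErr.prod_left hvelErr).exists_pos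
  obtain ⟨h₀, hh₀, hsmall⟩ := exists_pos_forall_of_eventually_nhds_zero
    ((eventually_isUnit_one_add_sq_smul β (tendsto_const_nhds (x := hessV x₀))).and
      ((eventually_isUnit_one_add_sq_smul β
        ((hH.tendsto x₀).comp (tendsto_sylipnPos β gradV hessV x₀ v₀))).and hCerr.bound))
  refine ⟨C, hC, h₀, hh₀, fun h h0 hh => ?_⟩
  obtain ⟨hu₀, hu₁, hbound⟩ := hsmall h h0 hh
  rw [Prod.norm_def, norm_pow, Real.norm_of_nonneg h0.le] at hbound
  exact ⟨hu₀, hu₁, (le_max_left _ _).trans hbound, (le_max_right _ _).trans hbound⟩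
end
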